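/- Reduction to single-input controllability: Let A be an n×n real matrix and B an n×m real matrix such that the Kalman matrix K(A,B) has rank n. Then there exist a vector y ∈ ℝᵐ and an m×n real matrix C such that the single-input pair (A + BC, By) satisfies the Kalman condition, i.e., the n×n matrix (By, (A+BC)By, …, (A+BC)^{n−1}By) has rank n. -/

import Mathlib

open MeasureTheory Matrix Set

/-- The Kalman matrix `K(A,B) = (B, AB, …, A^{n−1}B)` of the pair `(A,B)`. -/
noncomputable def kalmanMatrix {n m : ℕ} (A : Matrix (Fin n) (Fin n) ℝ)
    (B : Matrix (Fin n) (Fin m) ℝ) : Matrix (Fin n) (Fin n × Fin m) ℝ :=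
  Matrix.of fun i p => (A ^ (p.1 : ℕ) * B) i p.2

/-- The single-input Kalman matrix `(b, Mb, …, M^{n−1}b)` of a pair `(M, b)` with `b ∈ ℝⁿ`. -/
noncomputable def kalmanMatrixSingle {n : ℕ} (M : Matrix (Fin n) (Fin n) ℝ) (b : Fin n → ℝ) :
    Matrix (Fin n) (Fin n) ℝ :=
  Matrix.of fun i k => (M ^ (k : ℕ) *ᵥ b) i

/-- Core step: if the partial trajectory `x 0, …, x (k-1)` is linearly independent and
`k < n`, then some control `w` pushes the trajectory out of the current span. -/
lemma extend_step {n m k : ℕ} (A : Matrix (Fin n) (Fin n) ℝ) (B : Matrix (Fin n) (Fin m) ℝ)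
    (hK : (kalmanMatrix A B).rank = n) (hk : k < n)
    (x : ℕ → Fin n → ℝ) (u : ℕ → Fin m → ℝ)
    (hx : LinearIndependent ℝ (fun i : Fin k => x i))
    (hrec : ∀ i, i + 1 < k → x (i + 1) = A *ᵥ x i + B *ᵥ u i) :
    ∃ w : Fin m → ℝ,
      A *ᵥ x (k - 1) + B *ᵥ w ∉ Submodule.span ℝ (Set.range (fun i : Fin k => x i)) := by
  by_contra hcon
  push_neg at hcon
  set V := Submodule.span ℝ (Set.range (fun i : Fin k => x i)) with hV
  have hAlast : A *ᵥ x (k - 1) ∈ V := by simpa using hcon 0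
  have hB : ∀ w, B *ᵥ w ∈ V := by
    intro w
    have h1 : A *ᵥ x (k - 1) + B *ᵥ w - A *ᵥ x (k - 1) ∈ V := V.sub_mem (hcon w) hAlast
    simpa using h1
  have hxV : ∀ i, i < k → x i ∈ V := fun i hi => Submodule.subset_span ⟨⟨i, hi⟩, rfl⟩
  have hA : ∀ i, i < k → A *ᵥ x i ∈ V := by
    intro i hi
    rcases eq_or_lt_of_le (Nat.succ_le_of_lt hi) with h | h
    · have hik : i = k - 1 := by omega
      rw [hik]; exact hAlast
    · have hx1 : A *ᵥ x i = x (i + 1) - B *ᵥ u i := by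
        rw [hrec i h]; abel
      rw [hx1]; exact V.sub_mem (hxV _ h) (hB _)
  have hAV : ∀ v ∈ V, A *ᵥ v ∈ V := by
    intro v hv
    induction hv using Submodule.span_induction with
    | mem v hvmem => obtain ⟨i, rfl⟩ := hvmem; exact hA i.val i.isLt
    | zero => simpa using V.zero_mem
    | add a b _ _ ha hb => rw [Matrix.mulVec_add]; exact V.add_mem ha hb
    | smul c a _ ha => rw [Matrix.mulVec_smul]; exact V.smul_mem c ha
  have hpow : ∀ (j : ℕ) (w : Fin m → ℝ), (A ^ j) *ᵥ (B *ᵥ w) ∈ V := by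
    intro j
    induction j with
    | zero => intro w; simpa using hB w
    | succ j ih =>
      intro w
      rw [pow_succ', ← Matrix.mulVec_mulVec]
      exact hAV _ (ih w)
  have htop : Submodule.span ℝ (Set.range (kalmanMatrix A B)ᵀ) = ⊤ := by
    show Submodule.span ℝ (Set.range (kalmanMatrix A B).col) = ⊤
    rw [← Matrix.range_mulVecLin]
    apply Submodule.eq_top_of_finrank_eq
    rw [Module.finrank_fin_fun]
    exact hK
  have hle : (⊤ : Submodule ℝ (Fin n → ℝ)) ≤ V := by
    rw [← htop]
    apply Submodule.span_le.2
    rintro _ ⟨p, rfl⟩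
    have hcol : (kalmanMatrix A B)ᵀ p = (A ^ (p.1 : ℕ)) *ᵥ (B *ᵥ Pi.single p.2 1) := by
      rw [Matrix.mulVec_mulVec, Matrix.mulVec_single]
      funext i
      simp [kalmanMatrix]
    rw [hcol]
    exact hpow _ _
  have hVtop : V = ⊤ := le_antisymm le_top hle
  have hdim : Module.finrank ℝ V = k := by simpa using finrank_span_eq_card hx
  rw [hVtop, finrank_top, Module.finrank_fin_fun] at hdim
  omega

/-- Greedy construction of a controlled trajectory whose first `k` states are independent. -/
lemma trajectory_exists {n m : ℕ} (A : Matrix (Fin n) (Fin n) ℝ) (B : Matrix (Fin n) (Fin m) ℝ)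
    (hK : (kalmanMatrix A B).rank = n) (y0 : Fin m → ℝ) (hy0 : B *ᵥ y0 ≠ 0) :
    ∀ k, 1 ≤ k → k ≤ n →
      ∃ (x : ℕ → Fin n → ℝ) (u : ℕ → Fin m → ℝ),
        x 0 = B *ᵥ y0 ∧ LinearIndependent ℝ (fun i : Fin k => x i) ∧
        ∀ i, i + 1 < k → x (i + 1) = A *ᵥ x i + B *ᵥ u i := by
  intro k
  induction k with
  | zero => omega
  | succ k ih =>
    intro _ hkn
    rcases Nat.eq_zero_or_pos k with hk0 | hk1
    · -- k = 0 : base case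
      subst hk0
      refine ⟨fun _ => B *ᵥ y0, fun _ => 0, rfl, ?_, by omega⟩
      have h1 : LinearIndependent ℝ (fun _ : Fin 1 => B *ᵥ y0) :=
        linearIndependent_unique_iff.2 hy0
      exact h1
    · -- k ≥ 1 : use ih and extend
      obtain ⟨x, u, hx0, hxli, hxrec⟩ := ih hk1 (by omega)
      obtain ⟨w, hw⟩ := extend_step A B hK (by omega) x u hxli hxrec
      set xnew := A *ᵥ x (k - 1) + B *ᵥ w with hxnew
      refine ⟨Function.update x k xnew, Function.update u (k - 1) w, ?_, ?_, ?_⟩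
      · rw [Function.update_of_ne (by omega)]; exact hx0
      · have heq : (fun i : Fin (k + 1) => Function.update x k xnew i) =
            Fin.snoc (fun i : Fin k => x i) xnew := by
          funext i
          induction i using Fin.lastCases with
          | last =>
            rw [Fin.snoc_last]
            have hl : ((Fin.last k : Fin (k + 1)) : ℕ) = k := rfl
            rw [hl, Function.update_self]
          | cast j =>
            rw [Fin.snoc_castSucc]
            show Function.update x k xnew ((j : ℕ)) = x j
            rw [Function.update_of_ne (by omega : (j : ℕ) ≠ k)]
        rw [heq, linearIndependent_fin_snoc]
        exact ⟨hxli, hw⟩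
      · intro i hi
        rcases Nat.lt_or_ge (i + 1) k with h | h
        · rw [Function.update_of_ne (by omega : i + 1 ≠ k),
            Function.update_of_ne (by omega : i ≠ k),
            Function.update_of_ne (by omega : i ≠ k - 1)]
          exact hxrec i h
        · have hik : i = k - 1 := by omega
          have hik1 : i + 1 = k := by omega
          rw [hik1, Function.update_self, hik, Function.update_self,
            Function.update_of_ne (by omega : k - 1 ≠ k)]

/-- **Reduction to single-input controllability**: if `(A,B)` satisfies the Kalman condition,
then there exist `y ∈ ℝᵐ` and an `m × n` matrix `C` such that the single-input pair
`(A + BC, By)` satisfies the Kalman condition. -/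
theorem single_input_reduction {n m : ℕ} (A : Matrix (Fin n) (Fin n) ℝ)
    (B : Matrix (Fin n) (Fin m) ℝ) (hK : (kalmanMatrix A B).rank = n) :
    ∃ (y : Fin m → ℝ) (C : Matrix (Fin m) (Fin n) ℝ),
      (kalmanMatrixSingle (A + B * C) (B *ᵥ y)).rank = n := by
  rcases Nat.eq_zero_or_pos n with hn0 | hn
  · subst hn0
    exact ⟨0, 0, Nat.le_zero.mp (Matrix.rank_le_height _)⟩
  -- n ≥ 1.  First find y0 with B *ᵥ y0 ≠ 0.
  have hB0 : ∃ y0 : Fin m → ℝ, B *ᵥ y0 ≠ 0 := by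
    by_contra hcon
    push_neg at hcon
    have hBzero : B = 0 := by
      ext i j
      have h1 := congrFun (hcon (Pi.single j 1)) i
      rw [Matrix.mulVec_single] at h1
      simpa using h1
    have hKz : kalmanMatrix A B = 0 := by
      ext i p
      simp [kalmanMatrix, hBzero]
    rw [hKz, Matrix.rank_zero] at hK
    omega
  obtain ⟨y0, hy0⟩ := hB0
  obtain ⟨x, u, hx0, hxli, hxrec⟩ :=
    trajectory_exists A B hK y0 hy0 n hn le_rfl
  -- Build the basis from the trajectory.
  haveI : Nonempty (Fin n) := ⟨⟨0, hn⟩⟩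
  have hcard : Fintype.card (Fin n) = Module.finrank ℝ (Fin n → ℝ) := by
    simp [Module.finrank_fin_fun]
  let bas : Module.Basis (Fin n) ℝ (Fin n → ℝ) := basisOfLinearIndependentOfCardEqFinrank hxli hcard
  have hbas : ⇑bas = fun i : Fin n => x i := coe_basisOfLinearIndependentOfCardEqFinrank hxli hcard
  -- The feedback matrix
  let L : (Fin n → ℝ) →ₗ[ℝ] Fin m → ℝ := bas.constr ℝ (fun i : Fin n => u i)
  let C : Matrix (Fin m) (Fin n) ℝ := LinearMap.toMatrix' L
  have hC : ∀ i : Fin n, C *ᵥ x i = u i := by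
    intro i
    have h1 : C *ᵥ x i = L (x i) := by
      rw [← Matrix.toLin'_apply, Matrix.toLin'_toMatrix']
    have h2 : bas i = x (i : ℕ) := by rw [hbas]
    rw [h1, ← h2]
    exact bas.constr_basis ℝ _ i
  refine ⟨y0, C, ?_⟩
  -- Trajectory coincides with powers of A + B*C applied to x 0
  have hpow : ∀ k, k < n → (A + B * C) ^ k *ᵥ x 0 = x k := by
    intro k
    induction k with
    | zero => intro _; simp
    | succ k ihk =>
      intro hkn
      rw [pow_succ', ← Matrix.mulVec_mulVec, ihk (by omega), Matrix.add_mulVec,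
        ← Matrix.mulVec_mulVec, hC ⟨k, by omega⟩]
      exact (hxrec k hkn).symm
  have hKS : kalmanMatrixSingle (A + B * C) (B *ᵥ y0) =
      Matrix.of fun i (k : Fin n) => x k i := by
    ext i k
    simp only [kalmanMatrixSingle, Matrix.of_apply, ← hx0]
    rw [hpow k.val k.isLt]
  rw [hKS]
  -- rank is n since the columns form a basis
  have hspan : Submodule.span ℝ (Set.range (Matrix.of fun i (k : Fin n) => x k i)ᵀ) = ⊤ := by
    have htr : (Matrix.of fun i (k : Fin n) => x k i)ᵀ = fun k : Fin n => x k := rfl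
    rw [htr, ← hbas]
    exact bas.span_eq
  show Module.finrank ℝ ↥(LinearMap.range (Matrix.of fun i (k : Fin n) => x k i).mulVecLin) = n
  rw [Matrix.range_mulVecLin, show (Matrix.of fun i (k : Fin n) => x k i).col = (Matrix.of fun i (k : Fin n) => x k i)ᵀ from rfl, hspan, finrank_top, Module.finrank_fin_fun]
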